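/- For 0 < α < 1, the function f₂(x) = (x−1)((x+1)² + 1)^α + 2((x+1)² + 4)^α − (x−1)(x² + 1)^α − (x² + 9)^α is strictly increasing on [1, ∞). -/

import Mathlib

/-!
The derivative `f₂'` is positive on `[1, ∞)`. Writing `U, V, W, Z` for the `(α - 1)`-th powers of
`(x+1)² + 1, x² + 1, (x+1)² + 4, x² + 9`, concavity of `t ↦ t^α` gives
`((x+1)²+1)^α - (x²+1)^α ≥ α (2x+1) U`, monotonicity of `t ↦ t^α` gives
`2x(x-1) V ≤ (2x² + 2x - 1) U`, and `(x+1)² + 4 ≤ 2 (x² + 9)` with `α - 1 ∈ [-1, 0]` gives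
`Z ≤ 2W`. With these three bounds all `U`-terms of `f₂'` cancel and `f₂' ≥ 4αW > 0`.
-/

open Real

lemma mul_rpow_sub_one_mul_sub_le_rpow_sub_rpow {α u v : ℝ} (hα0 : 0 ≤ α) (hα1 : α ≤ 1)
    (hv : 0 ≤ v) (hvu : v ≤ u) : α * u ^ (α - 1) * (u - v) ≤ u ^ α - v ^ α := by
  obtain rfl | hu := (hv.trans hvu).eq_or_lt
  · obtain rfl := le_antisymm hvu hv
    simp
  have hbernoulli := rpow_one_add_le_one_add_mul_self (s := v / u - 1)
    (by linarith [div_nonneg hv hu.le]) hα0 hα1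
  rw [add_sub_cancel, div_rpow hv hu.le, div_le_iff₀ (by positivity)] at hbernoulli
  have hsplit : (1 + α * (v / u - 1)) * u ^ α = u ^ α - α * u ^ (α - 1) * (u - v) := by
    rw [rpow_sub_one hu.ne']
    field_simp
    ring
  linarith

lemma rpow_le_mul_rpow_of_le_mul {k b c p : ℝ} (hk : 1 ≤ k) (hb : 0 < b) (hbc : b ≤ k * c)
    (hp0 : -1 ≤ p) (hp1 : p ≤ 0) : c ^ p ≤ k * b ^ p := by
  have hk0 : 0 < k := one_pos.trans_le hk
  calc c ^ p ≤ (b / k) ^ p := rpow_le_rpow_of_nonpos (by positivity) (by rwa [div_le_iff₀' hk0]) hp1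
    _ = k ^ (-p) * b ^ p := by rw [div_rpow hb.le hk0.le, rpow_neg hk0.le]; ring
    _ ≤ k ^ (1 : ℝ) * b ^ p := by gcongr; linarith
    _ = k * b ^ p := by rw [rpow_one]

lemma hasDerivAt_sq_add_rpow {c : ℝ} (α x : ℝ) (hc : 0 < c) :
    HasDerivAt (fun x : ℝ => (x ^ 2 + c) ^ α) (2 * x * α * (x ^ 2 + c) ^ (α - 1)) x := by
  have h := ((hasDerivAt_id x).pow 2).add_const c
  exact (h.rpow_const (Or.inl (add_pos_of_nonneg_of_pos (sq_nonneg _) hc).ne')).congr_deriv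
    (by simp)

noncomputable def f₂ (α x : ℝ) : ℝ :=
  (x - 1) * ((x + 1) ^ 2 + 1) ^ α + 2 * ((x + 1) ^ 2 + 4) ^ α
    - (x - 1) * (x ^ 2 + 1) ^ α - (x ^ 2 + 9) ^ α

noncomputable def f₂' (α x : ℝ) : ℝ :=
  ((x + 1) ^ 2 + 1) ^ α - (x ^ 2 + 1) ^ α
    + 2 * α * (x ^ 2 - 1) * ((x + 1) ^ 2 + 1) ^ (α - 1)
    + 4 * α * (x + 1) * ((x + 1) ^ 2 + 4) ^ (α - 1)
    - 2 * α * x * (x - 1) * (x ^ 2 + 1) ^ (α - 1)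
    - 2 * α * x * (x ^ 2 + 9) ^ (α - 1)

lemma hasDerivAt_f₂ (α x : ℝ) : HasDerivAt (f₂ α) (f₂' α x) x := by
  have hlin := (hasDerivAt_id' x).sub_const 1
  have h₁ := (hasDerivAt_sq_add_rpow α (x + 1) one_pos).comp_add_const x 1
  have h₄ := (hasDerivAt_sq_add_rpow α (x + 1) four_pos).comp_add_const x 1
  have h₁' := hasDerivAt_sq_add_rpow α x one_pos
  have h₉ := hasDerivAt_sq_add_rpow α x (by norm_num : (0 : ℝ) < 9)
  exact ((((hlin.mul h₁).add (h₄.const_mul 2)).sub (hlin.mul h₁')).sub h₉).congr_deriv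
    (by rw [f₂']; ring)

lemma f₂'_pos {α x : ℝ} (hα0 : 0 < α) (hα1 : α ≤ 1) (hx : 1 ≤ x) : 0 < f₂' α x := by
  rw [f₂']
  set U := ((x + 1) ^ 2 + 1) ^ (α - 1)
  set V := (x ^ 2 + 1) ^ (α - 1)
  set W := ((x + 1) ^ 2 + 4) ^ (α - 1)
  set Z := (x ^ 2 + 9) ^ (α - 1)
  have hconcave : α * U * ((x + 1) ^ 2 + 1 - (x ^ 2 + 1))
      ≤ ((x + 1) ^ 2 + 1) ^ α - (x ^ 2 + 1) ^ α :=
    mul_rpow_sub_one_mul_sub_le_rpow_sub_rpow hα0.le hα1 (by positivity) (by nlinarith)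
  have hVU : (x ^ 2 + 1) * V ≤ ((x + 1) ^ 2 + 1) * U := by
    simp only [U, V, rpow_sub_one (ne_of_gt (by positivity : (0 : ℝ) < x ^ 2 + 1)),
      rpow_sub_one (ne_of_gt (by positivity : (0 : ℝ) < (x + 1) ^ 2 + 1))]
    field_simp
    exact rpow_le_rpow (by positivity) (by nlinarith) hα0.le
  have hV : 2 * x * (x - 1) * V ≤ (2 * x ^ 2 + 2 * x - 1) * U := by
    refine le_of_mul_le_mul_left ?_ (by positivity : (0 : ℝ) < x ^ 2 + 1)
    nlinarith [mul_le_mul_of_nonneg_left hVU (by nlinarith : 0 ≤ 2 * x * (x - 1)),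
      mul_nonneg (by nlinarith : 0 ≤ x ^ 2 + 6 * x - 1) (by positivity : 0 ≤ U)]
  have hZ : Z ≤ 2 * W :=
    rpow_le_mul_rpow_of_le_mul one_le_two (by positivity) (by nlinarith) (by linarith) (by linarith)
  have hW : 0 < 4 * α * W := by positivity
  linear_combination hconcave + mul_le_mul_of_nonneg_left hV hα0.le
    + mul_le_mul_of_nonneg_left hZ (by positivity : 0 ≤ 2 * α * x) + hW

theorem stmt_13 (α : ℝ) (hα0 : 0 < α) (hα1 : α < 1) :
    StrictMonoOn (fun x : ℝ =>
      (x - 1) * ((x + 1) ^ 2 + 1) ^ α + 2 * ((x + 1) ^ 2 + 4) ^ α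
        - (x - 1) * (x ^ 2 + 1) ^ α - (x ^ 2 + 9) ^ α) (Set.Ici 1) := by
  change StrictMonoOn (f₂ α) _
  refine strictMonoOn_of_hasDerivWithinAt_pos (convex_Ici 1)
    (continuous_iff_continuousAt.2 fun x => (hasDerivAt_f₂ α x).continuousAt).continuousOn
    (fun x _ => (hasDerivAt_f₂ α x).hasDerivWithinAt) fun x hx => ?_
  rw [interior_Ici] at hx
  exact f₂'_pos hα0 hα1.le hx.le
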